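/- Let t_1, \ldots, t_l be distinct real numbers and let H_n = (K_n(t_i, t_j))_{i,j=1}^l, where K_n is the Lubinsky kernel K_n(u,v) = \sum_{k=1}^n \psi_k(u)\overline{\psi_k(v)} with \psi_1 = 1, \psi_k(t) = k^{1/2-it} - (k-1)^{1/2-it}. Then \det H_n / (\log n)^l \to \prod_{j=1}^l |1/2 + it_j|^2 as n \to \infty; in particular H_n is nonsingular for all sufficiently large n. -/

import Mathlib

open Filter Topology

/-- Lubinsky's Dirichlet orthonormal polynomials. -/
noncomputable def lubinskyPsi (n : ℕ) (t : ℝ) : ℂ :=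
  if n ≤ 1 then 1
  else (n : ℂ) ^ ((1/2 : ℂ) - Complex.I * t) - ((n : ℂ) - 1) ^ ((1/2 : ℂ) - Complex.I * t)

/-- The Lubinsky reproducing kernel. -/
noncomputable def lubinskyKernel (n : ℕ) (u v : ℝ) : ℂ :=
  ∑ k ∈ Finset.Icc 1 n, lubinskyPsi k u * (starRingEnd ℂ) (lubinskyPsi k v)

/-!
Write `s(u) = 1/2 - iu`. Then
`ψ_{k+1}(u) = (k+1)^{s(u)} - k^{s(u)} = s(u) (k+1)^{s(u)-1} + O(k^{-3/2})`
and `conj ψ_k(v) = ψ_k(-v)`, so `K_n(u,v) = s(u) s(-v) ∑_{k ≤ n} k^{c-1} + O(1)` with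
`c = s(u) + s(-v) - 1 = -i(u - v)`. For `u = v` the sum is the harmonic number `log n + O(1)`, and
`s(u) s(-u) = 1/4 + u²`; for `u ≠ v` it telescopes, up to a summable error, against `k ↦ k^c`,
which has modulus one, so it stays bounded. Hence `H_n / log n` tends to the diagonal matrix
`diag(1/4 + t_j²)`, and the determinant is continuous.
-/

open Complex ComplexConjugate Asymptotics Finset

lemma hasDerivAt_ofReal_cpow_const_of_pos (c : ℂ) {x : ℝ} (hx : 0 < x) :
    HasDerivAt (fun y : ℝ => (y : ℂ) ^ c) (c * (x : ℂ) ^ (c - 1)) x := by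
  simpa using ((hasDerivAt_id (x : ℂ)).cpow_const (ofReal_mem_slitPlane.2 hx)).comp_ofReal

lemma norm_ofReal_cpow_sub_cpow_le {c : ℂ} (hc : c.re ≤ 1) {a b : ℝ} (ha : 0 < a)
    (hab : a ≤ b) :
    ‖(b : ℂ) ^ c - (a : ℂ) ^ c‖ ≤ ‖c‖ * a ^ (c.re - 1) * (b - a) := by
  have hderiv : ∀ x ∈ Set.Icc a b,
      HasDerivWithinAt (fun y : ℝ => (y : ℂ) ^ c) (c * (x : ℂ) ^ (c - 1)) (Set.Icc a b) x :=
    fun x hx => (hasDerivAt_ofReal_cpow_const_of_pos c (ha.trans_le hx.1)).hasDerivWithinAt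
  have hbound : ∀ x ∈ Set.Icc a b, ‖c * (x : ℂ) ^ (c - 1)‖ ≤ ‖c‖ * a ^ (c.re - 1) := by
    intro x hx
    rw [norm_mul, norm_cpow_eq_rpow_re_of_pos (ha.trans_le hx.1), sub_re, one_re]
    exact mul_le_mul_of_nonneg_left (Real.rpow_le_rpow_of_nonpos ha hx.1 (by linarith))
      (norm_nonneg c)
  simpa [Real.norm_eq_abs, abs_of_nonneg (sub_nonneg.2 hab)] using
    (convex_Icc a b).norm_image_sub_le_of_norm_hasDerivWithin_le hderiv hbound
      (Set.left_mem_Icc.2 hab) (Set.right_mem_Icc.2 hab)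

/-- Mean value theorem applied to `x ↦ x ^ c - c (a + 1) ^ (c - 1) x` on `[a, a + 1]`. -/
lemma norm_ofReal_cpow_add_one_sub_cpow_sub_le {c : ℂ} (hc : c.re ≤ 2) {a : ℝ} (ha : 0 < a) :
    ‖((a + 1 : ℝ) : ℂ) ^ c - (a : ℂ) ^ c - c * ((a + 1 : ℝ) : ℂ) ^ (c - 1)‖
      ≤ ‖c‖ * ‖c - 1‖ * a ^ (c.re - 2) := by
  set d : ℂ := c * ((a + 1 : ℝ) : ℂ) ^ (c - 1)
  have hderiv : ∀ x ∈ Set.Icc a (a + 1),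
      HasDerivWithinAt (fun y : ℝ => (y : ℂ) ^ c - d * y) (c * (x : ℂ) ^ (c - 1) - d)
        (Set.Icc a (a + 1)) x := fun x hx =>
    ((hasDerivAt_ofReal_cpow_const_of_pos c (ha.trans_le hx.1)).sub
      (by simpa using ofRealCLM.hasDerivAt.const_mul d)).hasDerivWithinAt
  have hbound : ∀ x ∈ Set.Icc a (a + 1),
      ‖c * (x : ℂ) ^ (c - 1) - d‖ ≤ ‖c‖ * ‖c - 1‖ * a ^ (c.re - 2) := by
    intro x ⟨hax, hxa⟩
    have hx : 0 < x := ha.trans_le hax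
    have hdiff := norm_ofReal_cpow_sub_cpow_le (c := c - 1)
      (by simp only [sub_re, one_re]; linarith) hx hxa
    rw [sub_re, one_re, show c.re - 1 - 1 = c.re - 2 by ring] at hdiff
    calc ‖c * (x : ℂ) ^ (c - 1) - d‖
        = ‖c‖ * ‖((a + 1 : ℝ) : ℂ) ^ (c - 1) - (x : ℂ) ^ (c - 1)‖ := by
          rw [← norm_mul, ← norm_neg]; congr 1; simp only [d]; ring
      _ ≤ ‖c‖ * (‖c - 1‖ * x ^ (c.re - 2) * (a + 1 - x)) := by gcongr
      _ ≤ ‖c‖ * (‖c - 1‖ * a ^ (c.re - 2) * 1) := by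
          have hpow : x ^ (c.re - 2) ≤ a ^ (c.re - 2) :=
            Real.rpow_le_rpow_of_nonpos ha hax (by linarith)
          gcongr
          linarith
      _ = ‖c‖ * ‖c - 1‖ * a ^ (c.re - 2) := by ring
  have h := (convex_Icc a (a + 1)).norm_image_sub_le_of_norm_hasDerivWithin_le hderiv hbound
    (Set.left_mem_Icc.2 (by linarith)) (Set.right_mem_Icc.2 (by linarith))
  simp only [add_sub_cancel_left, norm_one, mul_one] at h
  calc _ = ‖((a + 1 : ℝ) : ℂ) ^ c - d * ((a + 1 : ℝ) : ℂ) - ((a : ℂ) ^ c - d * a)‖ := by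
        congr 1; push_cast; ring
    _ ≤ _ := h

lemma isBigO_cpow_succ_sub_cpow_sub {c : ℂ} (hc : c.re ≤ 2) :
    (fun k : ℕ => ((k : ℂ) + 1) ^ c - (k : ℂ) ^ c - c * ((k : ℂ) + 1) ^ (c - 1))
      =O[atTop] fun k : ℕ => (k : ℝ) ^ (c.re - 2) := by
  refine IsBigO.of_bound (‖c‖ * ‖c - 1‖) ?_
  filter_upwards [eventually_gt_atTop 0] with k hk
  have hk' : (0 : ℝ) < k := by exact_mod_cast hk
  rw [Real.norm_of_nonneg (Real.rpow_nonneg hk'.le _)]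
  simpa using norm_ofReal_cpow_add_one_sub_cpow_sub_le hc hk'

lemma isBigO_sum_range_inv_sub_log :
    (fun n : ℕ => ∑ k ∈ range n, ((k : ℂ) + 1)⁻¹ - Real.log n)
      =O[atTop] fun _ => (1 : ℝ) := by
  have hγ := (continuous_ofReal.tendsto _).comp Real.tendsto_harmonic_sub_log
  refine (hγ.isBigO_one ℝ).congr_left fun n => ?_
  simp [harmonic]

lemma isBigO_sum_range_cpow_sub_one {c : ℂ} (hc : c ≠ 0) (hre : c.re = 0) :
    (fun n : ℕ => ∑ k ∈ range n, ((k : ℂ) + 1) ^ (c - 1)) =O[atTop] fun _ => (1 : ℝ) := by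
  set η : ℕ → ℂ := fun k => ((k : ℂ) + 1) ^ c - (k : ℂ) ^ c - c * ((k : ℂ) + 1) ^ (c - 1)
  have hη : Summable η :=
    summable_of_isBigO_nat (Real.summable_nat_rpow.2 (by norm_num [hre]))
      (isBigO_cpow_succ_sub_cpow_sub (by norm_num [hre]))
  have htelescope (n : ℕ) :
      ∑ k ∈ range n, ((k : ℂ) + 1) ^ (c - 1) = c⁻¹ * ((n : ℂ) ^ c - ∑ k ∈ range n, η k) := by
    have h := sum_range_sub (fun k : ℕ => (k : ℂ) ^ c) n
    push_cast at h
    rw [zero_cpow hc, sub_zero] at h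
    rw [← h, ← sum_sub_distrib, mul_sum]
    refine sum_congr rfl fun k _ => ?_
    simp only [η]
    field_simp
    ring
  have hpow : (fun n : ℕ => (n : ℂ) ^ c) =O[atTop] fun _ => (1 : ℝ) := by
    refine IsBigO.of_bound 1 (Eventually.of_forall fun n => ?_)
    rcases n.eq_zero_or_pos with rfl | hn
    · simp [zero_cpow hc]
    · simp [norm_natCast_cpow_of_pos hn, hre]
  simpa only [htelescope] using
    (hpow.sub (hη.hasSum.tendsto_sum_nat.isBigO_one ℝ)).const_mul_left c⁻¹

noncomputable def lubinskyExponent (u : ℝ) : ℂ := 1 / 2 - I * u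

@[simp]
lemma lubinskyExponent_re (u : ℝ) : (lubinskyExponent u).re = 1 / 2 := by
  simp [lubinskyExponent]

lemma lubinskyExponent_ne_zero (u : ℝ) : lubinskyExponent u ≠ 0 := fun h => by
  simpa using congrArg re h

lemma conj_lubinskyExponent (u : ℝ) : conj (lubinskyExponent u) = lubinskyExponent (-u) := by
  simp [lubinskyExponent, map_ofNat]

lemma lubinskyExponent_add_neg_sub_one (u v : ℝ) :
    lubinskyExponent u + lubinskyExponent (-v) - 1 = -I * ((u - v : ℝ) : ℂ) := by
  simp only [lubinskyExponent]; push_cast; ring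

lemma lubinskyExponent_mul_neg (u : ℝ) :
    lubinskyExponent u * lubinskyExponent (-u) = ((1 / 4 + u ^ 2 : ℝ) : ℂ) := by
  simp only [lubinskyExponent]; push_cast; ring_nf; simp

lemma lubinskyPsi_succ (k : ℕ) (u : ℝ) :
    lubinskyPsi (k + 1) u
      = ((k : ℂ) + 1) ^ lubinskyExponent u - (k : ℂ) ^ lubinskyExponent u := by
  rcases k.eq_zero_or_pos with rfl | hk
  · simp [lubinskyPsi, zero_cpow (lubinskyExponent_ne_zero u)]
  · rw [lubinskyPsi, if_neg (by omega)]
    push_cast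
    simp [lubinskyExponent]

lemma conj_natCast_cpow (m : ℕ) (s : ℂ) : conj ((m : ℂ) ^ s) = (m : ℂ) ^ conj s := by
  rw [cpow_conj _ _ (by simp [natCast_arg, Real.pi_ne_zero.symm]), conj_natCast]

lemma conj_lubinskyPsi (k : ℕ) (v : ℝ) : conj (lubinskyPsi k v) = lubinskyPsi k (-v) := by
  rcases k with _ | k
  · simp [lubinskyPsi]
  · rw [lubinskyPsi_succ, lubinskyPsi_succ, ← conj_lubinskyExponent, map_sub]
    exact_mod_cast congrArg₂ (· - ·) (conj_natCast_cpow (k + 1) _) (conj_natCast_cpow k _)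

lemma lubinskyKernel_eq_sum_range (n : ℕ) (u v : ℝ) :
    lubinskyKernel n u v = ∑ k ∈ range n, lubinskyPsi (k + 1) u * lubinskyPsi (k + 1) (-v) := by
  rw [lubinskyKernel, ← Ico_add_one_right_eq_Icc, sum_Ico_eq_sum_range, Nat.add_sub_cancel]
  simp [conj_lubinskyPsi, add_comm]

lemma isBigO_lubinskyPsi_sub (u : ℝ) :
    (fun k : ℕ => lubinskyPsi (k + 1) u
        - lubinskyExponent u * ((k : ℂ) + 1) ^ (lubinskyExponent u - 1))
      =O[atTop] fun k : ℕ => (k : ℝ) ^ (-(3 / 2) : ℝ) := by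
  have h := isBigO_cpow_succ_sub_cpow_sub (c := lubinskyExponent u) (by norm_num)
  norm_num at h
  simpa [lubinskyPsi_succ] using h

lemma isBigO_lubinskyExponent_mul_cpow (u : ℝ) :
    (fun k : ℕ => lubinskyExponent u * ((k : ℂ) + 1) ^ (lubinskyExponent u - 1))
      =O[atTop] fun _ => (1 : ℝ) := by
  refine IsBigO.of_bound ‖lubinskyExponent u‖ (Eventually.of_forall fun k => ?_)
  have hpow : ‖((k : ℂ) + 1) ^ (lubinskyExponent u - 1)‖ ≤ 1 := by
    rw [show (k : ℂ) + 1 = ((k + 1 : ℕ) : ℂ) by push_cast; ring,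
      norm_natCast_cpow_of_pos k.succ_pos]
    exact Real.rpow_le_one_of_one_le_of_nonpos (by simp) (by norm_num)
  simpa using mul_le_mul_of_nonneg_left hpow (norm_nonneg _)

lemma isBigO_lubinskyPsi_mul_sub (u v : ℝ) :
    (fun k : ℕ => lubinskyPsi (k + 1) u * lubinskyPsi (k + 1) (-v)
        - lubinskyExponent u * lubinskyExponent (-v)
          * ((k : ℂ) + 1) ^ (lubinskyExponent u + lubinskyExponent (-v) - 1 - 1))
      =O[atTop] fun k : ℕ => (k : ℝ) ^ (-(3 / 2) : ℝ) := by
  set m : ℝ → ℕ → ℂ :=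
    fun w k => lubinskyExponent w * ((k : ℂ) + 1) ^ (lubinskyExponent w - 1)
  set ε : ℝ → ℕ → ℂ := fun w k => lubinskyPsi (k + 1) w - m w k
  have hdecomp (k : ℕ) : lubinskyPsi (k + 1) u * lubinskyPsi (k + 1) (-v)
      - lubinskyExponent u * lubinskyExponent (-v)
        * ((k : ℂ) + 1) ^ (lubinskyExponent u + lubinskyExponent (-v) - 1 - 1)
      = m u k * ε (-v) k + ε u k * m (-v) k + ε u k * ε (-v) k := by
    have hk : (k : ℂ) + 1 ≠ 0 := by exact_mod_cast k.succ_ne_zero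
    simp only [m, ε, show lubinskyExponent u + lubinskyExponent (-v) - 1 - 1
      = (lubinskyExponent u - 1) + (lubinskyExponent (-v) - 1) by ring, cpow_add _ _ hk]
    ring
  have hsmall : (fun k : ℕ => (k : ℝ) ^ (-(3 / 2) : ℝ)) =O[atTop] fun _ => (1 : ℝ) :=
    ((tendsto_rpow_neg_atTop (by norm_num)).comp tendsto_natCast_atTop_atTop).isBigO_one ℝ
  have h₁ := (isBigO_lubinskyExponent_mul_cpow u).mul (isBigO_lubinskyPsi_sub (-v))
  have h₂ := (isBigO_lubinskyPsi_sub u).mul (isBigO_lubinskyExponent_mul_cpow (-v))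
  have h₃ := (isBigO_lubinskyPsi_sub u).mul ((isBigO_lubinskyPsi_sub (-v)).trans hsmall)
  simp only [one_mul, mul_one] at h₁ h₂ h₃
  simpa only [hdecomp] using (h₁.add h₂).add h₃

lemma isBigO_lubinskyKernel_sub_mul_log (u v : ℝ) :
    (fun n : ℕ => lubinskyKernel n u v
        - (if u = v then ((1 / 4 + u ^ 2 : ℝ) : ℂ) else 0) * Real.log n)
      =O[atTop] fun _ => (1 : ℝ) := by
  set c := lubinskyExponent u + lubinskyExponent (-v) - 1
  have hc : c = -I * ((u - v : ℝ) : ℂ) := lubinskyExponent_add_neg_sub_one u v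
  have herr := summable_of_isBigO_nat (Real.summable_nat_rpow.2 (by norm_num))
    (isBigO_lubinskyPsi_mul_sub u v)
  have hmain : (fun n : ℕ => ∑ k ∈ range n, ((k : ℂ) + 1) ^ (c - 1)
      - (if u = v then (Real.log n : ℂ) else 0)) =O[atTop] fun _ => (1 : ℝ) := by
    by_cases huv : u = v
    · simpa [huv, hc, cpow_neg_one] using isBigO_sum_range_inv_sub_log
    · have hc0 : c ≠ 0 := by simp [hc, sub_eq_zero, huv]
      simpa [huv] using isBigO_sum_range_cpow_sub_one hc0 (by simp [hc])
  have hcoef (L : ℂ) : (if u = v then ((1 / 4 + u ^ 2 : ℝ) : ℂ) else 0) * L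
      = lubinskyExponent u * lubinskyExponent (-v) * (if u = v then L else 0) := by
    split_ifs with huv
    · rw [← huv, lubinskyExponent_mul_neg]
    · simp
  refine ((hmain.const_mul_left (lubinskyExponent u * lubinskyExponent (-v))).add
    (herr.hasSum.tendsto_sum_nat.isBigO_one ℝ)).congr_left fun n => ?_
  rw [lubinskyKernel_eq_sum_range, hcoef, sum_sub_distrib, mul_sub, mul_sum]
  ring

lemma tendsto_div_of_isBigO_sub_mul {α : Type*} {l : Filter α} {f : α → ℂ} {g : α → ℝ}
    {A : ℂ} (hg : Tendsto g l atTop) (h : (fun x => f x - A * g x) =O[l] fun _ => (1 : ℝ)) :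
    Tendsto (fun x => f x / g x) l (𝓝 A) := by
  have hsmall : Tendsto (fun x => (f x - A * g x) * (g x : ℂ)⁻¹) l (𝓝 0) := by
    refine (h.mul (isBigO_refl (fun x => (g x : ℂ)⁻¹) l).norm_right).trans_tendsto ?_
    simp only [one_mul, norm_inv, norm_real, Real.norm_eq_abs]
    exact (tendsto_abs_atTop_atTop.comp hg).inv_tendsto_atTop
  refine tendsto_sub_nhds_zero_iff.1 (hsmall.congr' ?_)
  filter_upwards [hg.eventually_gt_atTop 0] with x hx
  have : (g x : ℂ) ≠ 0 := by exact_mod_cast hx.ne'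
  field_simp

lemma tendsto_lubinskyKernel_div_log (u v : ℝ) :
    Tendsto (fun n : ℕ => lubinskyKernel n u v / Real.log n) atTop
      (𝓝 (if u = v then ((1 / 4 + u ^ 2 : ℝ) : ℂ) else 0)) :=
  tendsto_div_of_isBigO_sub_mul (Real.tendsto_log_atTop.comp tendsto_natCast_atTop_atTop)
    (isBigO_lubinskyKernel_sub_mul_log u v)

theorem lubinskyKernel_gram_det_asymptotics (l : ℕ) (t : Fin l → ℝ)
    (ht : Function.Injective t) :
    Tendsto
      (fun n : ℕ =>
        (Matrix.det (Matrix.of fun i j : Fin l => lubinskyKernel n (t i) (t j))) /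
          (Real.log n : ℂ) ^ l)
      atTop (𝓝 (∏ j : Fin l, ((1/4 : ℝ) + (t j) ^ 2 : ℝ))) ∧
    ∃ N : ℕ, ∀ n ≥ N,
      IsUnit (Matrix.det (Matrix.of fun i j : Fin l => lubinskyKernel n (t i) (t j))) := by
  set K : ℕ → Matrix (Fin l) (Fin l) ℂ :=
    fun n => Matrix.of fun i j => lubinskyKernel n (t i) (t j)
  have hK : Tendsto (fun n : ℕ => (Real.log n : ℂ)⁻¹ • K n) atTop
      (𝓝 (Matrix.diagonal fun j => ((1 / 4 + t j ^ 2 : ℝ) : ℂ))) := by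
    refine tendsto_pi_nhds.2 fun i => tendsto_pi_nhds.2 fun j => ?_
    simpa [K, Matrix.diagonal_apply, ht.eq_iff, div_eq_inv_mul] using
      tendsto_lubinskyKernel_div_log (t i) (t j)
  have hdet : Tendsto (fun n : ℕ => (K n).det / (Real.log n : ℂ) ^ l) atTop
      (𝓝 (∏ j, ((1 / 4 + t j ^ 2 : ℝ) : ℂ))) := by
    simpa [Function.comp_def, Matrix.det_smul, Matrix.det_diagonal, div_eq_inv_mul, inv_pow]
      using ((continuous_id.matrix_det).tendsto _).comp hK
  refine ⟨hdet, ?_⟩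
  have hlim : ∏ j, ((1 / 4 + t j ^ 2 : ℝ) : ℂ) ≠ 0 :=
    prod_ne_zero_iff.2 fun j _ => ofReal_ne_zero.2 (by positivity)
  obtain ⟨N, hN⟩ := eventually_atTop.1 (hdet.eventually_ne hlim)
  exact ⟨N, fun n hn => isUnit_iff_ne_zero.2 fun h0 => hN n hn (by simp [K, h0])⟩
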